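/- Let 𝕄, 𝕄_T, 𝕄_H be structured sparsity models on {1,…,n}, let 0 ≤ δ < 1, 0 < c_H ≤ 1, c_T ≥ 1 be reals with α₀ := c_H(1−δ) − δ > 0, and set β₀ := (1+c_H)√(1+δ). Suppose A ∈ ℝ^{m×n} has the (δ, 𝕄 ⊕ 𝕄_T ⊕ 𝕄_H)-model-RIP. Let x, xⁱ ∈ ℝⁿ with supp(x) ∈ 𝕄⁺ and supp(xⁱ) ∈ 𝕄_T⁺, let e ∈ ℝᵐ, set r = x − xⁱ and b = Aᵀ(Ar + e). Let Γ ∈ 𝕄_H⁺ satisfy ‖b_Γ‖₂ ≥ c_H‖b_Ω‖₂ for every Ω ∈ 𝕄_T ⊕ 𝕄, set a = xⁱ + b_Γ, and let Ω' ∈ 𝕄_T⁺ satisfy ‖a − a_{Ω'}‖₂ ≤ c_T‖a − a_Ω‖₂ for every Ω ∈ 𝕄; set x^{i+1} = a_{Ω'}. Then ‖x − x^{i+1}‖₂ ≤ α‖x − xⁱ‖₂ + β‖e‖₂, where α = (1+c_T)(δ + √(1−α₀²)) and β = (1+c_T)(β₀/α₀ + α₀β₀/√(1−α₀²) + √(1+δ)).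 -/

import Mathlib

/-!
Write `ρ = δ‖r‖ + √(1+δ)‖e‖`. By polarization, the model-RIP on the union `U` of the supports of
`x`, `xⁱ` and `Γ` makes `AᵀA` the identity up to `δ` on vectors supported in `U`, so every
restriction of `b − r` to a subset of `U` has norm at most `ρ`. Hence `‖b_Ω‖ ≥ ‖r‖ − ρ` on the
support `Ω` of `r`, the head condition turns this into `‖r_Γ‖ ≥ α₀‖r‖ − β₀‖e‖`, and Pythagoras
bounds `‖r_Γᶜ‖` by `√(1−α₀²)‖r‖ + (β₀/α₀ + α₀β₀/√(1−α₀²))‖e‖`. Finally `x − a = r_Γᶜ − (b − r)_Γ`,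
and since `x` competes in the tail condition, `‖x − xⁱ⁺¹‖ ≤ (1 + c_T)‖x − a‖`.
-/

/-- The ℓ₂ norm of a vector in ℝⁿ. -/
noncomputable def l2norm {k : ℕ} (x : Fin k → ℝ) : ℝ := Real.sqrt (∑ i, (x i) ^ 2)

/-- Restriction of a vector to a set of coordinates: agrees with `x` on `Ω`, zero elsewhere. -/
noncomputable def restr {k : ℕ} (x : Fin k → ℝ) (Ω : Set (Fin k)) : Fin k → ℝ := Ω.indicator x

/-- The closure of a structured sparsity model under taking subsets. -/
def modelPlus {k : ℕ} (M : Set (Set (Fin k))) : Set (Set (Fin k)) :=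
  {Ω | ∃ S ∈ M, Ω ⊆ S}

/-- The sum of two structured sparsity models. -/
def modelSum {k : ℕ} (M₁ M₂ : Set (Set (Fin k))) : Set (Set (Fin k)) :=
  {Ω | ∃ S₁ ∈ M₁, ∃ S₂ ∈ M₂, Ω = S₁ ∪ S₂}

/-- A matrix `A` has the `(δ, M)`-model-RIP. -/
def hasModelRIP {m n : ℕ} (A : Matrix (Fin m) (Fin n) ℝ) (δ : ℝ)
    (M : Set (Set (Fin n))) : Prop :=
  ∀ x : Fin n → ℝ, Function.support x ∈ modelPlus M →
    (1 - δ) * (l2norm x) ^ 2 ≤ (l2norm (A.mulVec x)) ^ 2 ∧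
    (l2norm (A.mulVec x)) ^ 2 ≤ (1 + δ) * (l2norm x) ^ 2

open Matrix Function Set

section L2Norm

variable {k : ℕ}

lemma l2norm_eq_norm_toLp (x : Fin k → ℝ) :
    l2norm x = ‖(WithLp.toLp 2 x : EuclideanSpace ℝ (Fin k))‖ := by
  simp [l2norm, EuclideanSpace.norm_eq]

lemma l2norm_nonneg (x : Fin k → ℝ) : 0 ≤ l2norm x := Real.sqrt_nonneg _

lemma l2norm_eq_zero {x : Fin k → ℝ} : l2norm x = 0 ↔ x = 0 := by
  rw [l2norm_eq_norm_toLp, norm_eq_zero, WithLp.toLp_eq_zero]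

lemma l2norm_sq (x : Fin k → ℝ) : l2norm x ^ 2 = ∑ i, x i ^ 2 :=
  Real.sq_sqrt (Finset.sum_nonneg fun i _ => sq_nonneg (x i))

lemma l2norm_sq_eq_dotProduct (x : Fin k → ℝ) : l2norm x ^ 2 = x ⬝ᵥ x := by
  rw [l2norm_sq]
  simp only [dotProduct, sq]

lemma l2norm_neg (x : Fin k → ℝ) : l2norm (-x) = l2norm x := by
  simp only [l2norm_eq_norm_toLp, WithLp.toLp_neg, norm_neg]

lemma l2norm_smul (c : ℝ) (x : Fin k → ℝ) : l2norm (c • x) = |c| * l2norm x := by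
  simp only [l2norm_eq_norm_toLp, WithLp.toLp_smul, norm_smul, Real.norm_eq_abs]

lemma l2norm_add_le (x y : Fin k → ℝ) : l2norm (x + y) ≤ l2norm x + l2norm y := by
  simp only [l2norm_eq_norm_toLp, WithLp.toLp_add]
  exact norm_add_le _ _

lemma l2norm_sub_le (x y : Fin k → ℝ) : l2norm (x - y) ≤ l2norm x + l2norm y := by
  simp only [l2norm_eq_norm_toLp, WithLp.toLp_sub]
  exact norm_sub_le _ _

lemma abs_l2norm_sub_l2norm_le (x y : Fin k → ℝ) : |l2norm x - l2norm y| ≤ l2norm (x - y) := by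
  simp only [l2norm_eq_norm_toLp, WithLp.toLp_sub]
  exact abs_norm_sub_norm_le _ _

lemma l2norm_sub_comm (x y : Fin k → ℝ) : l2norm (x - y) = l2norm (y - x) := by
  simp only [l2norm_eq_norm_toLp, WithLp.toLp_sub]
  exact norm_sub_rev _ _

lemma dotProduct_le_l2norm_mul (x y : Fin k → ℝ) : x ⬝ᵥ y ≤ l2norm x * l2norm y :=
  Real.sum_mul_le_sqrt_mul_sqrt _ x y

lemma abs_dotProduct_le_l2norm_mul (x y : Fin k → ℝ) : |x ⬝ᵥ y| ≤ l2norm x * l2norm y := by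
  refine abs_le.2 ⟨?_, dotProduct_le_l2norm_mul x y⟩
  have := dotProduct_le_l2norm_mul (-x) y
  rw [neg_dotProduct, l2norm_neg] at this
  linarith

lemma l2norm_le_l2norm_of_abs_le {x y : Fin k → ℝ} (h : ∀ i, |x i| ≤ |y i|) :
    l2norm x ≤ l2norm y :=
  Real.sqrt_le_sqrt (Finset.sum_le_sum fun i _ => sq_le_sq.2 (h i))

end L2Norm

section Restriction

variable {k : ℕ}

lemma restr_sub (x y : Fin k → ℝ) (S : Set (Fin k)) :
    restr (x - y) S = restr x S - restr y S :=
  indicator_sub S x y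

lemma abs_l2norm_restr_sub_l2norm_restr_le (x y : Fin k → ℝ) (S : Set (Fin k)) :
    |l2norm (restr x S) - l2norm (restr y S)| ≤ l2norm (restr (x - y) S) :=
  restr_sub x y S ▸ abs_l2norm_sub_l2norm_le _ _

lemma restr_restr (x : Fin k → ℝ) (S T : Set (Fin k)) :
    restr (restr x T) S = restr x (S ∩ T) :=
  indicator_indicator S T x

lemma restr_eq_self_of_support_subset {x : Fin k → ℝ} {S : Set (Fin k)}
    (h : support x ⊆ S) : restr x S = x :=
  indicator_eq_self.2 h

lemma restr_eq_zero_of_disjoint {x : Fin k → ℝ} {S T : Set (Fin k)}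
    (h : support x ⊆ T) (hST : Disjoint T S) : restr x S = 0 :=
  indicator_eq_zero.2 (hST.mono_left h)

lemma l2norm_restr_sq_add_restr_compl_sq (x : Fin k → ℝ) (S : Set (Fin k)) :
    l2norm (restr x S) ^ 2 + l2norm (restr x Sᶜ) ^ 2 = l2norm x ^ 2 := by
  simp only [l2norm_sq, ← Finset.sum_add_distrib]
  refine Finset.sum_congr rfl fun i _ => ?_
  by_cases hi : i ∈ S <;> simp [restr, hi]

lemma l2norm_restr_inter_sq_add_restr_compl_inter_sq (x : Fin k → ℝ) (S T : Set (Fin k)) :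
    l2norm (restr x (S ∩ T)) ^ 2 + l2norm (restr x (Sᶜ ∩ T)) ^ 2 = l2norm (restr x T) ^ 2 := by
  simpa only [restr_restr] using l2norm_restr_sq_add_restr_compl_sq (restr x T) S

lemma l2norm_sub_restr_le_of_support_subset (a : Fin k → ℝ) {x : Fin k → ℝ} {S : Set (Fin k)}
    (h : support x ⊆ S) : l2norm (a - restr a S) ≤ l2norm (a - x) :=
  l2norm_le_l2norm_of_abs_le fun i => by
    by_cases hi : i ∈ S
    · simp [restr, hi]
    · simp [restr, hi, notMem_support.1 fun h' => hi (h h')]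

lemma l2norm_sub_restr_le_of_tail {a x : Fin k → ℝ} {S T : Set (Fin k)} {c : ℝ} (hc : 0 ≤ c)
    (hx : support x ⊆ S) (htail : l2norm (a - restr a T) ≤ c * l2norm (a - restr a S)) :
    l2norm (x - restr a T) ≤ (1 + c) * l2norm (x - a) :=
  calc l2norm (x - restr a T) ≤ l2norm (x - a) + l2norm (a - restr a T) := by
        simpa using l2norm_add_le (x - a) (a - restr a T)
    _ ≤ l2norm (x - a) + c * l2norm (a - x) := by
        gcongr
        exact htail.trans
          (mul_le_mul_of_nonneg_left (l2norm_sub_restr_le_of_support_subset a hx) hc)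
    _ = (1 + c) * l2norm (x - a) := by rw [l2norm_sub_comm a x]; ring

lemma l2norm_restr_le_of_abs_dotProduct_le {z : Fin k → ℝ} {C : ℝ} {U S : Set (Fin k)}
    (hC : 0 ≤ C) (h : ∀ w, support w ⊆ U → |w ⬝ᵥ z| ≤ C * l2norm w) (hS : S ⊆ U) :
    l2norm (restr z S) ≤ C := by
  have hw : restr z S ⬝ᵥ z = l2norm (restr z S) ^ 2 := by
    rw [l2norm_sq_eq_dotProduct]
    refine Finset.sum_congr rfl fun i _ => ?_
    by_cases hi : i ∈ S <;> simp [restr, hi]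
  have := (le_abs_self _).trans (h (restr z S) (support_indicator_subset.trans hS))
  rw [hw] at this
  nlinarith [l2norm_nonneg (restr z S)]

end Restriction

namespace hasModelRIP

variable {m n : ℕ} {A : Matrix (Fin m) (Fin n) ℝ} {δ : ℝ} {U : Set (Fin n)}

lemma singleton {M : Set (Set (Fin n))} (hA : hasModelRIP A δ M) (hU : U ∈ M) :
    hasModelRIP A δ {U} :=
  fun x ⟨_, hS, hx⟩ => hA x ⟨U, hU, (mem_singleton_iff.1 hS) ▸ hx⟩

lemma sq_bounds (hA : hasModelRIP A δ {U}) {v : Fin n → ℝ} (hv : support v ⊆ U) :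
    (1 - δ) * l2norm v ^ 2 ≤ l2norm (A *ᵥ v) ^ 2 ∧ l2norm (A *ᵥ v) ^ 2 ≤ (1 + δ) * l2norm v ^ 2 :=
  hA v ⟨U, rfl, hv⟩

lemma l2norm_mulVec_le (hA : hasModelRIP A δ {U}) {v : Fin n → ℝ} (hv : support v ⊆ U) :
    l2norm (A *ᵥ v) ≤ √(1 + δ) * l2norm v :=
  calc l2norm (A *ᵥ v) = √(l2norm (A *ᵥ v) ^ 2) := (Real.sqrt_sq (l2norm_nonneg _)).symm
    _ ≤ √((1 + δ) * l2norm v ^ 2) := Real.sqrt_le_sqrt (hA.sq_bounds hv).2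
    _ = √(1 + δ) * l2norm v := by
      rw [Real.sqrt_mul' _ (sq_nonneg _), Real.sqrt_sq (l2norm_nonneg _)]

lemma abs_dotProduct_mulVec_sub_le_half (hA : hasModelRIP A δ {U}) {u v : Fin n → ℝ}
    (hu : support u ⊆ U) (hv : support v ⊆ U) :
    |(A *ᵥ u) ⬝ᵥ (A *ᵥ v) - u ⬝ᵥ v| ≤ δ / 2 * (l2norm u ^ 2 + l2norm v ^ 2) := by
  have hdiag : ∀ w, support w ⊆ U → |(A *ᵥ w) ⬝ᵥ (A *ᵥ w) - w ⬝ᵥ w| ≤ δ * (w ⬝ᵥ w) := by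
    intro w hw
    obtain ⟨h1, h2⟩ := hA.sq_bounds hw
    rw [l2norm_sq_eq_dotProduct, l2norm_sq_eq_dotProduct] at h1 h2
    exact abs_le.2 ⟨by linarith, by linarith⟩
  have hadd := hdiag (u + v) ((support_add u v).trans (union_subset hu hv))
  have hsub := hdiag (u - v) ((support_sub u v).trans (union_subset hu hv))
  simp only [mulVec_add, mulVec_sub, add_dotProduct, dotProduct_add, sub_dotProduct,
    dotProduct_sub, dotProduct_comm v u, dotProduct_comm (A *ᵥ v) (A *ᵥ u)] at hadd hsub
  rw [l2norm_sq_eq_dotProduct, l2norm_sq_eq_dotProduct]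
  rw [abs_le] at hadd hsub ⊢
  constructor <;> linarith [hadd.1, hadd.2, hsub.1, hsub.2]

lemma abs_dotProduct_mulVec_sub_le (hA : hasModelRIP A δ {U}) {u v : Fin n → ℝ}
    (hu : support u ⊆ U) (hv : support v ⊆ U) :
    |(A *ᵥ u) ⬝ᵥ (A *ᵥ v) - u ⬝ᵥ v| ≤ δ * l2norm u * l2norm v := by
  rcases (l2norm_nonneg u).eq_or_lt with hu0 | hu0
  · obtain rfl := l2norm_eq_zero.1 hu0.symm
    simp [← hu0]
  rcases (l2norm_nonneg v).eq_or_lt with hv0 | hv0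
  · obtain rfl := l2norm_eq_zero.1 hv0.symm
    simp [← hv0]
  -- rescale `u` and `v` to the same norm `‖u‖ ‖v‖`, where the polarization bound is sharp
  have h := hA.abs_dotProduct_mulVec_sub_le_half (u := l2norm v • u) (v := l2norm u • v)
    ((support_const_smul_subset _ _).trans hu) ((support_const_smul_subset _ _).trans hv)
  simp only [mulVec_smul, smul_dotProduct, dotProduct_smul, l2norm_smul, smul_eq_mul,
    abs_of_pos hu0, abs_of_pos hv0] at h
  rw [← mul_assoc, ← mul_assoc, ← mul_sub, abs_mul, abs_of_pos (mul_pos hu0 hv0)] at h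
  have key : l2norm u * l2norm v * |(A *ᵥ u) ⬝ᵥ (A *ᵥ v) - u ⬝ᵥ v|
      ≤ l2norm u * l2norm v * (δ * l2norm u * l2norm v) := by
    linarith
  exact le_of_mul_le_mul_left key (mul_pos hu0 hv0)

lemma abs_dotProduct_transpose_mulVec_sub_le (hA : hasModelRIP A δ {U}) {r w : Fin n → ℝ}
    (hr : support r ⊆ U) (hw : support w ⊆ U) (e : Fin m → ℝ) :
    |w ⬝ᵥ (Aᵀ *ᵥ (A *ᵥ r + e) - r)| ≤ (δ * l2norm r + √(1 + δ) * l2norm e) * l2norm w := by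
  have hAA := hA.abs_dotProduct_mulVec_sub_le hw hr
  have hAe : |(A *ᵥ w) ⬝ᵥ e| ≤ √(1 + δ) * l2norm w * l2norm e :=
    (abs_dotProduct_le_l2norm_mul _ _).trans
      (mul_le_mul_of_nonneg_right (hA.l2norm_mulVec_le hw) (l2norm_nonneg e))
  have hsplit : w ⬝ᵥ (Aᵀ *ᵥ (A *ᵥ r + e) - r)
      = ((A *ᵥ w) ⬝ᵥ (A *ᵥ r) - w ⬝ᵥ r) + (A *ᵥ w) ⬝ᵥ e := by
    rw [dotProduct_sub, dotProduct_mulVec, vecMul_transpose, dotProduct_add]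
    ring
  rw [hsplit]
  linarith [abs_add_le ((A *ᵥ w) ⬝ᵥ (A *ᵥ r) - w ⬝ᵥ r) ((A *ᵥ w) ⬝ᵥ e)]

lemma l2norm_restr_transpose_mulVec_sub_le (hA : hasModelRIP A δ {U}) (hδ : 0 ≤ δ)
    {r : Fin n → ℝ} (hr : support r ⊆ U) (e : Fin m → ℝ) {S : Set (Fin n)} (hS : S ⊆ U) :
    l2norm (restr (Aᵀ *ᵥ (A *ᵥ r + e) - r) S) ≤ δ * l2norm r + √(1 + δ) * l2norm e :=
  l2norm_restr_le_of_abs_dotProduct_le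
    (by have := l2norm_nonneg r; have := l2norm_nonneg e; positivity)
    (fun _ hw => hA.abs_dotProduct_transpose_mulVec_sub_le hr hw e) hS

end hasModelRIP

lemma le_of_sq_add_sq_eq_of_sub_le {α₀ β₀ R E N T : ℝ} (hα₀ : 0 < α₀) (hα₀1 : α₀ < 1)
    (hβ₀ : 0 ≤ β₀) (hR : 0 ≤ R) (hE : 0 ≤ E) (hN : 0 ≤ N) (hNT : N ^ 2 + T ^ 2 = R ^ 2)
    (hT : α₀ * R - β₀ * E ≤ T) :
    N ≤ √(1 - α₀ ^ 2) * R + (β₀ / α₀ + α₀ * β₀ / √(1 - α₀ ^ 2)) * E := by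
  set q := √(1 - α₀ ^ 2)
  have hq2 : q ^ 2 = 1 - α₀ ^ 2 := Real.sq_sqrt (by nlinarith)
  have hq : 0 < q := Real.sqrt_pos.2 (by nlinarith)
  have hβ₀E : 0 ≤ β₀ / α₀ * E := by positivity
  have hqE : 0 ≤ α₀ * β₀ / q * E := by positivity
  by_cases hK : α₀ * R ≤ β₀ * E
  · have hNR : N ≤ R := by nlinarith
    have hRE : R ≤ β₀ / α₀ * E := by
      rw [div_mul_eq_mul_div, le_div_iff₀ hα₀]
      linarith
    nlinarith
  · have hNsq : N ^ 2 ≤ R ^ 2 - (α₀ * R - β₀ * E) ^ 2 := by nlinarith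
    have hexpand : (q * R + α₀ * β₀ / q * E) ^ 2
        = (1 - α₀ ^ 2) * R ^ 2 + 2 * α₀ * β₀ * R * E + (α₀ * β₀ / q * E) ^ 2 := by
      have hcq : α₀ * β₀ / q * q = α₀ * β₀ := div_mul_cancel₀ _ hq.ne'
      linear_combination R ^ 2 * hq2 + 2 * R * E * hcq
    have : N ≤ q * R + α₀ * β₀ / q * E :=
      (pow_le_pow_iff_left₀ hN (by positivity) two_ne_zero).1
        (by nlinarith [sq_nonneg (β₀ * E), sq_nonneg (α₀ * β₀ / q * E)])
    linarith

section HeadApproximation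

variable {k : ℕ} {r b : Fin k → ℝ} {Ω Γ : Set (Fin k)} {ρ : ℝ}

lemma sub_le_l2norm_restr_of_head (hr : support r ⊆ Ω)
    (hres : ∀ S ⊆ Ω ∪ Γ, l2norm (restr (b - r) S) ≤ ρ) {cH : ℝ} (hcH : 0 ≤ cH)
    (hhead : cH * l2norm (restr b Ω) ≤ l2norm (restr b Γ)) :
    cH * (l2norm r - ρ) - ρ ≤ l2norm (restr r Γ) := by
  have hΩ := abs_le.1 ((abs_l2norm_restr_sub_l2norm_restr_le b r Ω).trans
    (hres Ω subset_union_left))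
  have hΓ := abs_le.1 ((abs_l2norm_restr_sub_l2norm_restr_le b r Γ).trans
    (hres Γ subset_union_right))
  rw [restr_eq_self_of_support_subset hr] at hΩ
  nlinarith

lemma l2norm_restr_compl_le_two_mul (hr : support r ⊆ Ω)
    (hres : ∀ S ⊆ Ω ∪ Γ, l2norm (restr (b - r) S) ≤ ρ)
    (hhead : l2norm (restr b Ω) ≤ l2norm (restr b Γ)) :
    l2norm (restr r Γᶜ) ≤ 2 * ρ := by
  have hrΓc : restr r Γᶜ = restr r (Γᶜ ∩ Ω) := by
    rw [← restr_restr, restr_eq_self_of_support_subset hr]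
  have hr0 : restr r (Ωᶜ ∩ Γ) = 0 :=
    restr_eq_zero_of_disjoint hr (disjoint_compl_right.mono_right inter_subset_left)
  -- `b` has at least as much mass on `Γ ∖ Ω` as on `Ω ∖ Γ`, and `r` vanishes on `Γ ∖ Ω`
  have hswap : l2norm (restr b (Γᶜ ∩ Ω)) ≤ l2norm (restr b (Ωᶜ ∩ Γ)) := by
    have hΩ := l2norm_restr_inter_sq_add_restr_compl_inter_sq b Γ Ω
    have hΓ := l2norm_restr_inter_sq_add_restr_compl_inter_sq b Ω Γ
    rw [inter_comm Ω Γ] at hΓ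
    have := pow_le_pow_left₀ (l2norm_nonneg _) hhead 2
    exact (pow_le_pow_iff_left₀ (l2norm_nonneg _) (l2norm_nonneg _) two_ne_zero).1 (by linarith)
  have hbΓ : l2norm (restr b (Ωᶜ ∩ Γ)) ≤ ρ := by
    simpa [restr_sub, hr0] using hres (Ωᶜ ∩ Γ) (inter_subset_right.trans subset_union_right)
  have hrΩ := abs_le.1 ((abs_l2norm_restr_sub_l2norm_restr_le b r (Γᶜ ∩ Ω)).trans
    (hres _ (inter_subset_right.trans subset_union_left)))
  rw [hrΓc]
  linarith

end HeadApproximation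

lemma l2norm_restr_compl_le {k : ℕ} {r b : Fin k → ℝ} {Ω Γ : Set (Fin k)}
    {δ cH α₀ β₀ E : ℝ} (hδ0 : 0 ≤ δ) (hcH0 : 0 < cH) (hcH1 : cH ≤ 1)
    (hα₀ : α₀ = cH * (1 - δ) - δ) (hα₀pos : 0 < α₀) (hβ₀ : β₀ = (1 + cH) * √(1 + δ))
    (hE : 0 ≤ E) (hr : support r ⊆ Ω)
    (hres : ∀ S ⊆ Ω ∪ Γ, l2norm (restr (b - r) S) ≤ δ * l2norm r + √(1 + δ) * E)
    (hhead : cH * l2norm (restr b Ω) ≤ l2norm (restr b Γ)) :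
    l2norm (restr r Γᶜ) ≤ √(1 - α₀ ^ 2) * l2norm r + (β₀ / α₀ + α₀ * β₀ / √(1 - α₀ ^ 2)) * E := by
  have hα₀1 : α₀ ≤ 1 := by nlinarith
  rcases hα₀1.lt_or_eq with hα₀1 | rfl
  · refine le_of_sq_add_sq_eq_of_sub_le hα₀pos hα₀1 (hβ₀ ▸ by positivity) (l2norm_nonneg r) hE
      (l2norm_nonneg _) ((add_comm _ _).trans (l2norm_restr_sq_add_restr_compl_sq r Γ)) ?_
    have := sub_le_l2norm_restr_of_head hr hres hcH0.le hhead
    rw [hα₀, hβ₀]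
    linarith
  -- `α₀ = 1` forces `δ = 0` and `cH = 1`; then `α₀ * β₀ / √(1 - α₀ ^ 2)` is the junk value
  -- `2 / 0 = 0` and the claim is `‖r_Γᶜ‖ ≤ 2 ‖e‖`
  · obtain rfl : δ = 0 := by nlinarith
    obtain rfl : cH = 1 := by linarith
    have := l2norm_restr_compl_le_two_mul hr hres (by linarith)
    norm_num [hβ₀] at this ⊢
    linarith

theorem stmt2_general {n m : ℕ}
    (M MT MH : Set (Set (Fin n)))
    (δ cH cT : ℝ) (hδ0 : 0 ≤ δ) (hcH0 : 0 < cH) (hcH1 : cH ≤ 1)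
    (hcT : 1 ≤ cT)
    (α₀ β₀ : ℝ) (hα₀ : α₀ = cH * (1 - δ) - δ) (hα₀pos : 0 < α₀)
    (hβ₀ : β₀ = (1 + cH) * Real.sqrt (1 + δ))
    (A : Matrix (Fin m) (Fin n) ℝ)
    (hA : hasModelRIP A δ (modelSum (modelSum M MT) MH))
    (x xi : Fin n → ℝ)
    (hx : Function.support x ∈ modelPlus M)
    (hxi : Function.support xi ∈ modelPlus MT)
    (e : Fin m → ℝ)
    (r : Fin n → ℝ) (hr : r = x - xi)
    (b : Fin n → ℝ) (hb : b = A.transpose.mulVec (A.mulVec r + e))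
    (Γ : Set (Fin n)) (hΓ : Γ ∈ modelPlus MH)
    (hhead : ∀ Ω ∈ modelSum MT M, l2norm (restr b Γ) ≥ cH * l2norm (restr b Ω))
    (a : Fin n → ℝ) (ha : a = xi + restr b Γ)
    (Ω' : Set (Fin n))
    (htail : ∀ Ω ∈ M, l2norm (a - restr a Ω') ≤ cT * l2norm (a - restr a Ω))
    (xnext : Fin n → ℝ) (hxnext : xnext = restr a Ω')
    (α β : ℝ)
    (hα : α = (1 + cT) * (δ + Real.sqrt (1 - α₀ ^ 2)))
    (hβ : β = (1 + cT) * (β₀ / α₀ + α₀ * β₀ / Real.sqrt (1 - α₀ ^ 2) + Real.sqrt (1 + δ))) :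
    l2norm (x - xnext) ≤ α * l2norm (x - xi) + β * l2norm e := by
  obtain ⟨ΩM, hΩM, hxΩM⟩ := hx
  obtain ⟨ΩT, hΩT, hxiΩT⟩ := hxi
  obtain ⟨ΓH, hΓH, hΓΓH⟩ := hΓ
  have hrip : hasModelRIP A δ {ΩM ∪ ΩT ∪ ΓH} :=
    hA.singleton ⟨_, ⟨ΩM, hΩM, ΩT, hΩT, rfl⟩, ΓH, hΓH, rfl⟩
  have hΩΓ : ΩT ∪ ΩM ∪ Γ ⊆ ΩM ∪ ΩT ∪ ΓH := union_subset_union (union_comm _ _).subset hΓΓH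
  have hrΩ : support r ⊆ ΩT ∪ ΩM :=
    hr ▸ (support_sub x xi).trans (union_comm ΩM ΩT ▸ union_subset_union hxΩM hxiΩT)
  have hres : ∀ S ⊆ ΩT ∪ ΩM ∪ Γ,
      l2norm (restr (b - r) S) ≤ δ * l2norm r + √(1 + δ) * l2norm e := fun S hS =>
    hb ▸ hrip.l2norm_restr_transpose_mulVec_sub_le hδ0
      (hrΩ.trans (subset_union_left.trans hΩΓ)) e (hS.trans hΩΓ)
  have hcompl := l2norm_restr_compl_le hδ0 hcH0 hcH1 hα₀ hα₀pos hβ₀ (l2norm_nonneg e) hrΩ hres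
    (hhead _ ⟨ΩT, hΩT, ΩM, hΩM, rfl⟩)
  have hxa : x - a = restr r Γᶜ - restr (b - r) Γ := by
    ext i
    by_cases hi : i ∈ Γ <;> simp [ha, hr, restr, hi, sub_add_eq_sub_sub]
  have hxa_le : l2norm (x - a) ≤ l2norm (restr r Γᶜ) + (δ * l2norm r + √(1 + δ) * l2norm e) :=
    hxa ▸ (l2norm_sub_le _ _).trans (add_le_add_right (hres Γ subset_union_right) _)
  calc l2norm (x - xnext) ≤ (1 + cT) * l2norm (x - a) :=
        hxnext ▸ l2norm_sub_restr_le_of_tail (by linarith) hxΩM (htail ΩM hΩM)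
    _ ≤ (1 + cT) * ((√(1 - α₀ ^ 2) * l2norm r + (β₀ / α₀ + α₀ * β₀ / √(1 - α₀ ^ 2)) * l2norm e)
          + (δ * l2norm r + √(1 + δ) * l2norm e)) :=
        mul_le_mul_of_nonneg_left (by linarith) (by linarith)
    _ = α * l2norm (x - xi) + β * l2norm e := by rw [hα, hβ, ← hr]; ring

theorem stmt2 {n m : ℕ}
    (M MT MH : Set (Set (Fin n)))
    (δ cH cT : ℝ) (hδ0 : 0 ≤ δ) (hδ1 : δ < 1) (hcH0 : 0 < cH) (hcH1 : cH ≤ 1)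
    (hcT : 1 ≤ cT)
    (α₀ β₀ : ℝ) (hα₀ : α₀ = cH * (1 - δ) - δ) (hα₀pos : 0 < α₀)
    (hβ₀ : β₀ = (1 + cH) * Real.sqrt (1 + δ))
    (A : Matrix (Fin m) (Fin n) ℝ)
    (hA : hasModelRIP A δ (modelSum (modelSum M MT) MH))
    (x xi : Fin n → ℝ)
    (hx : Function.support x ∈ modelPlus M)
    (hxi : Function.support xi ∈ modelPlus MT)
    (e : Fin m → ℝ)
    (r : Fin n → ℝ) (hr : r = x - xi)
    (b : Fin n → ℝ) (hb : b = A.transpose.mulVec (A.mulVec r + e))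
    (Γ : Set (Fin n)) (hΓ : Γ ∈ modelPlus MH)
    (hhead : ∀ Ω ∈ modelSum MT M, l2norm (restr b Γ) ≥ cH * l2norm (restr b Ω))
    (a : Fin n → ℝ) (ha : a = xi + restr b Γ)
    (Ω' : Set (Fin n)) (hΩ' : Ω' ∈ modelPlus MT)
    (htail : ∀ Ω ∈ M, l2norm (a - restr a Ω') ≤ cT * l2norm (a - restr a Ω))
    (xnext : Fin n → ℝ) (hxnext : xnext = restr a Ω')
    (α β : ℝ)
    (hα : α = (1 + cT) * (δ + Real.sqrt (1 - α₀ ^ 2)))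
    (hβ : β = (1 + cT) * (β₀ / α₀ + α₀ * β₀ / Real.sqrt (1 - α₀ ^ 2) + Real.sqrt (1 + δ))) :
    l2norm (x - xnext) ≤ α * l2norm (x - xi) + β * l2norm e :=
  stmt2_general M MT MH δ cH cT hδ0 hcH0 hcH1 hcT α₀ β₀ hα₀ hα₀pos hβ₀ A hA x xi hx hxi e r hr b hb
    Γ hΓ hhead a ha Ω' htail xnext hxnext α β hα hβ
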